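/- arXiv:1506.04922 — 7 statements merged into one kernel-verified Lean document; each statement's English description precedes it below -/
import Mathlib

section
/- Let C be a real symmetric positive semi-definite p×p matrix and z ∈ ℂ with Im(z) = v > 0. Then Im(z + z · tr((C - zI)^{-1})) ≥ v. -/
open Matrix

theorem im_trace_resolvent_lower_bound (p : ℕ) (C : Matrix (Fin p) (Fin p) ℝ)
    (hC : C.PosSemidef) (z : ℂ) (hz : 0 < z.im) :
    z.im ≤
      (z + z * Matrix.trace ((C.map Complex.ofReal -
        z • (1 : Matrix (Fin p) (Fin p) ℂ))⁻¹)).im := by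
  have hH := hC.isHermitian
  set U : Matrix (Fin p) (Fin p) ℝ := (hH.eigenvectorUnitary : Matrix (Fin p) (Fin p) ℝ)
  set lam : Fin p → ℝ := hH.eigenvalues
  have hlam : ∀ i, 0 ≤ lam i := hC.eigenvalues_nonneg
  have hspec : C = U * Matrix.diagonal (RCLike.ofReal ∘ lam) * star U := hH.spectral_theorem
  set V : Matrix (Fin p) (Fin p) ℂ := U.map Complex.ofReal with hV
  have hstarmap : (star U).map Complex.ofReal = star V := by
    exact Matrix.conjTranspose_map Complex.ofReal (fun a => by simp)
  have hmm : ∀ A B : Matrix (Fin p) (Fin p) ℝ,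
      (A * B).map Complex.ofReal = A.map Complex.ofReal * B.map Complex.ofReal := by
    intro A B
    have := Matrix.map_mul (L := A) (M := B) (f := Complex.ofRealHom)
    exact this
  have hUU : U * star U = 1 := Matrix.mem_unitaryGroup_iff.mp hH.eigenvectorUnitary.2
  have hUU' : star U * U = 1 := Matrix.mem_unitaryGroup_iff'.mp hH.eigenvectorUnitary.2
  have hVV : V * star V = 1 := by
    rw [← hstarmap, hV, ← hmm, hUU]
    simp [Matrix.map_one]
  have hVV' : star V * V = 1 := by
    rw [← hstarmap, hV, ← hmm, hUU']
    simp [Matrix.map_one]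
  set d : Fin p → ℂ := fun i => (lam i : ℂ) - z with hd
  have hdne : ∀ i, d i ≠ 0 := by
    intro i h
    have : (d i).im = 0 := by rw [h]; simp
    simp [hd] at this
    linarith
  have hA : C.map Complex.ofReal = V * Matrix.diagonal (fun i => (lam i : ℂ)) * star V := by
    conv_lhs => rw [hspec]
    rw [← hstarmap, hV, hmm, hmm]
    congr 2
    ext i j
    simp [Matrix.diagonal_apply]
    split <;> simp
  have hres : C.map Complex.ofReal - z • (1 : Matrix (Fin p) (Fin p) ℂ)
      = V * Matrix.diagonal d * star V := by
    rw [hA]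
    have : z • (1 : Matrix (Fin p) (Fin p) ℂ) = V * (z • (1 : Matrix (Fin p) (Fin p) ℂ)) * star V := by
      rw [Matrix.mul_smul, Matrix.smul_mul, mul_one, hVV]
    rw [this, ← Matrix.sub_mul, ← Matrix.mul_sub]
    congr 2
    ext i j
    by_cases h : i = j <;> simp [Matrix.diagonal_apply, h, hd, Matrix.one_apply, Matrix.sub_apply]
  have hinv : (V * Matrix.diagonal d * star V)⁻¹ = V * Matrix.diagonal (fun i => (d i)⁻¹) * star V := by
    apply Matrix.inv_eq_right_inv
    calc V * Matrix.diagonal d * star V * (V * Matrix.diagonal (fun i => (d i)⁻¹) * star V)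
        = V * (Matrix.diagonal d * (star V * V) * Matrix.diagonal (fun i => (d i)⁻¹)) * star V := by
          noncomm_ring
      _ = 1 := by
          rw [hVV', mul_one, Matrix.diagonal_mul_diagonal]
          have : (fun i => d i * (d i)⁻¹) = fun _ => (1:ℂ) := by
            funext i; exact mul_inv_cancel₀ (hdne i)
          rw [this, Matrix.diagonal_one, mul_one, hVV]
  have htr : Matrix.trace ((C.map Complex.ofReal - z • (1 : Matrix (Fin p) (Fin p) ℂ))⁻¹)
      = ∑ i, (d i)⁻¹ := by
    rw [hres, hinv, Matrix.trace_mul_cycle, hVV', one_mul, Matrix.trace_diagonal]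
  rw [htr, Complex.add_im, Finset.mul_sum]
  have hterm : ∀ i, 0 ≤ (z * (d i)⁻¹).im := by
    intro i
    have hN : 0 < Complex.normSq (d i) := Complex.normSq_pos.mpr (hdne i)
    have him : (d i).im = -z.im := by simp [hd]
    have hre : (d i).re = lam i - z.re := by simp [hd]
    rw [Complex.mul_im, Complex.inv_im, Complex.inv_re, him, hre]
    have : z.re * (-(-z.im) / Complex.normSq (d i)) + z.im * ((lam i - z.re) / Complex.normSq (d i))
        = z.im * lam i / Complex.normSq (d i) := by field_simp; ring
    rw [this]
    exact div_nonneg (mul_nonneg hz.le (hlam i)) hN.le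
  have : 0 ≤ (∑ i, z * (d i)⁻¹).im := by
    rw [Complex.im_sum]
    exact Finset.sum_nonneg fun i _ => hterm i
  linarith
end

section
/- Let C be a real symmetric positive semi-definite p×p matrix, x ∈ ℝ^p, and z ∈ ℂ with Im(z) = v > 0. Then Im(z + z · xᵀ(C - zI)^{-1}x) ≥ v. -/
open Matrix

lemma quad_real (p : ℕ) (C : Matrix (Fin p) (Fin p) ℝ) (hC : C.PosSemidef)
    (y : Fin p → ℂ) :
    ∃ q : ℝ, 0 ≤ q ∧ dotProduct (star y) ((C.map Complex.ofReal).mulVec y) = (q : ℂ) := by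
  classical
  set a : Fin p → ℝ := fun i => (y i).re with ha
  set b : Fin p → ℝ := fun i => (y i).im with hb
  have hCT : Cᵀ = C := by
    have := hC.1.eq
    rwa [Matrix.conjTranspose_eq_transpose_of_trivial] at this
  have hsym : ∀ u w : Fin p → ℝ, dotProduct u (C.mulVec w) = dotProduct w (C.mulVec u) := by
    intro u w
    rw [Matrix.dotProduct_mulVec, ← hCT, Matrix.vecMul_transpose, hCT, dotProduct_comm]
  refine ⟨dotProduct a (C.mulVec a) + dotProduct b (C.mulVec b), ?_, ?_⟩
  · have h1 := hC.dotProduct_mulVec_nonneg a; have h2 := hC.dotProduct_mulVec_nonneg b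
    simp only [star_trivial] at h1 h2
    exact add_nonneg h1 h2
  · have key : ∀ u w : Fin p → ℝ,
        dotProduct (fun i => (u i : ℂ)) ((C.map Complex.ofReal).mulVec (fun i => (w i : ℂ)))
          = ((dotProduct u (C.mulVec w) : ℝ) : ℂ) := by
      intro u w
      simp [dotProduct, Matrix.mulVec, Matrix.map_apply, Finset.mul_sum]
    have hy : y = (fun i => (a i : ℂ)) + Complex.I • (fun i => (b i : ℂ)) := by
      funext i; simp [ha, hb, Complex.ext_iff]
    have hsy : star y = (fun i => (a i : ℂ)) - Complex.I • (fun i => (b i : ℂ)) := by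
      funext i; simp [ha, hb, Complex.ext_iff]
    rw [hsy, hy]
    simp only [Matrix.mulVec_add, Matrix.mulVec_smul, sub_dotProduct,
      dotProduct_add, smul_dotProduct, dotProduct_smul, smul_eq_mul]
    rw [key a a, key a b, key b a, key b b, hsym b a]
    push_cast
    linear_combination (-((dotProduct b (C.mulVec b) : ℝ) : ℂ)) * Complex.I_mul_I

lemma norm_dot (p : ℕ) (y : Fin p → ℂ) :
    dotProduct (star y) y = ((∑ i, Complex.normSq (y i) : ℝ) : ℂ) := by
  simp [dotProduct, Complex.normSq_eq_conj_mul_self]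

theorem im_quadratic_form_resolvent_lower_bound (p : ℕ) (C : Matrix (Fin p) (Fin p) ℝ)
    (hC : C.PosSemidef) (x : Fin p → ℝ) (z : ℂ) (hz : 0 < z.im) :
    z.im ≤
      (z + z * dotProduct (fun i => (x i : ℂ))
        (((C.map Complex.ofReal - z • (1 : Matrix (Fin p) (Fin p) ℂ))⁻¹).mulVec
          (fun i => (x i : ℂ)))).im := by
  classical
  set M := C.map Complex.ofReal with hM
  set A := M - z • (1 : Matrix (Fin p) (Fin p) ℂ) with hA
  set xc : Fin p → ℂ := fun i => (x i : ℂ) with hxc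
  have hMH : M.IsHermitian := hC.1.map Complex.ofReal (by intro a; simp)
  -- invertibility
  have hdet : A.det ≠ 0 := by
    intro h0
    obtain ⟨y, hy0, hAy⟩ := (Matrix.exists_mulVec_eq_zero_iff).mpr h0
    have hMy : M.mulVec y = z • y := by
      have := hAy
      rw [hA, Matrix.sub_mulVec, Matrix.smul_mulVec, Matrix.one_mulVec, sub_eq_zero] at this
      exact this
    obtain ⟨q, hq0, hq⟩ := quad_real p C hC y
    rw [hMy, dotProduct_smul, norm_dot, smul_eq_mul] at hq
    set n : ℝ := ∑ i, Complex.normSq (y i) with hn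
    have hnpos : 0 < n := by
      rw [hn]
      apply Finset.sum_pos'
      · intro i _; exact Complex.normSq_nonneg _
      · have : ∃ i, y i ≠ 0 := by
          by_contra hc
          push_neg at hc
          exact hy0 (funext hc)
        obtain ⟨i, hi⟩ := this
        exact ⟨i, Finset.mem_univ i, Complex.normSq_pos.mpr hi⟩
    have him := congrArg Complex.im hq
    simp [Complex.mul_im] at him
    rcases him with h | h
    · exact (ne_of_gt hz) h
    · exact (ne_of_gt hnpos) h
  -- main computation
  set y : Fin p → ℂ := A⁻¹.mulVec xc with hy
  have hAy : A.mulVec y = xc := by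
    rw [hy, Matrix.mulVec_mulVec, Matrix.mul_nonsing_inv A (isUnit_iff_ne_zero.mpr hdet), Matrix.one_mulVec]
  have hsxc : star xc = xc := by
    funext i; simp [hxc]
  obtain ⟨q, hq0, hq⟩ := quad_real p C hC y
  have hAH : Aᴴ = M - (starRingEnd ℂ z) • (1 : Matrix (Fin p) (Fin p) ℂ) := by
    rw [hA, Matrix.conjTranspose_sub, Matrix.conjTranspose_smul, Matrix.conjTranspose_one, hMH.eq]; rfl
  have key : dotProduct xc y = (q : ℂ) - (starRingEnd ℂ z) * ((∑ i, Complex.normSq (y i) : ℝ) : ℂ) := by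
    calc dotProduct xc y = dotProduct (star (A.mulVec y)) y := by rw [hAy, hsxc]
    _ = dotProduct (star y) (Aᴴ.mulVec y) := by
        rw [Matrix.star_mulVec, ← Matrix.dotProduct_mulVec]
    _ = dotProduct (star y) (M.mulVec y) - (starRingEnd ℂ z) * dotProduct (star y) y := by
        rw [hAH, Matrix.sub_mulVec, Matrix.smul_mulVec, Matrix.one_mulVec, dotProduct_sub,
          dotProduct_smul, smul_eq_mul]
    _ = (q : ℂ) - (starRingEnd ℂ z) * ((∑ i, Complex.normSq (y i) : ℝ) : ℂ) := by
        rw [hq, norm_dot]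
  rw [key]
  set n : ℝ := ∑ i, Complex.normSq (y i) with hn
  have : (z + z * ((q : ℂ) - (starRingEnd ℂ z) * (n : ℂ))).im = z.im + z.im * q := by
    have hzz : z * (starRingEnd ℂ z) = (Complex.normSq z : ℂ) := Complex.mul_conj z
    have : z * ((q : ℂ) - (starRingEnd ℂ z) * (n : ℂ)) = z * (q:ℂ) - (Complex.normSq z : ℂ) * (n:ℂ) := by
      rw [← hzz]; ring
    rw [this]
    simp [Complex.add_im, Complex.sub_im, Complex.mul_im]
  rw [this]
  nlinarith [hq0, hz]
end

section
/- Let C be a real symmetric positive semi-definite p×p matrix, x ∈ ℝ^p, and z ∈ ℂ with Im(z) > 0. Then xᵀ(C + xxᵀ - zI)^{-1}x = xᵀ(C - zI)^{-1}x / (1 + xᵀ(C - zI)^{-1}x), where the denominator is nonzero. -/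
open Matrix

lemma row_M_col {p : ℕ} (u : Fin p → ℂ) (M : Matrix (Fin p) (Fin p) ℂ) :
    replicateRow Unit u * M * replicateCol Unit u = (u ⬝ᵥ M *ᵥ u) • (1 : Matrix Unit Unit ℂ) := by
  rw [Matrix.mul_assoc, ← replicateCol_mulVec, replicateRow_mul_replicateCol]
  ext i j
  simp [Matrix.one_apply]

lemma vecMulVec_mulVec' {p : ℕ} (u v w : Fin p → ℂ) :
    vecMulVec u v *ᵥ w = (v ⬝ᵥ w) • u := by
  ext i
  simp [vecMulVec_apply, mulVec, dotProduct, Finset.mul_sum, mul_assoc, mul_comm, mul_left_comm]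

lemma sandwich {p : ℕ} (u : Fin p → ℂ) (M : Matrix (Fin p) (Fin p) ℂ) :
    vecMulVec u u * M * vecMulVec u u = (u ⬝ᵥ M *ᵥ u) • vecMulVec u u := by
  rw [vecMulVec_eq Unit]
  calc replicateCol Unit u * replicateRow Unit u * M * (replicateCol Unit u * replicateRow Unit u)
      = replicateCol Unit u * (replicateRow Unit u * M * replicateCol Unit u) * replicateRow Unit u := by
        simp only [Matrix.mul_assoc]
    _ = (u ⬝ᵥ M *ᵥ u) • (replicateCol Unit u * replicateRow Unit u) := by
        rw [row_M_col, Matrix.mul_smul, Matrix.mul_one, Matrix.smul_mul]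

lemma herm_resolvent_det_isUnit {p : ℕ} {M : Matrix (Fin p) (Fin p) ℂ}
    (hM : M.IsHermitian) {z : ℂ} (hz : z.im ≠ 0) :
    IsUnit (M - z • (1 : Matrix (Fin p) (Fin p) ℂ)).det := by
  rw [isUnit_iff_ne_zero]
  intro hdet
  obtain ⟨v, hv, hMv⟩ := (Matrix.exists_mulVec_eq_zero_iff).mpr hdet
  have hMv' : M *ᵥ v = z • v := by
    rw [sub_mulVec, smul_mulVec, one_mulVec, sub_eq_zero] at hMv
    exact hMv
  set q := star v ⬝ᵥ (M *ᵥ v) with hq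
  have hsq : star q = q := by
    calc star (star v ⬝ᵥ (M *ᵥ v)) = star (M *ᵥ v) ⬝ᵥ v := by
          rw [star_dotProduct, star_star]
      _ = (star v ᵥ* Mᴴ) ⬝ᵥ v := by rw [star_mulVec]
      _ = star v ⬝ᵥ (M *ᵥ v) := by rw [hM.eq, ← dotProduct_mulVec]
  have hqz : q = z * (star v ⬝ᵥ v) := by
    rw [hq, hMv', dotProduct_smul, smul_eq_mul]
  have hr : star v ⬝ᵥ v = ((∑ i, Complex.normSq (v i) : ℝ) : ℂ) := by
    push_cast
    simp [dotProduct, Complex.normSq_eq_conj_mul_self, Complex.star_def]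
  have hrpos : (0:ℝ) < ∑ i, Complex.normSq (v i) := by
    have : ∃ i, v i ≠ 0 := by
      by_contra h
      push_neg at h
      exact hv (funext h)
    obtain ⟨i, hi⟩ := this
    exact Finset.sum_pos' (fun j _ => Complex.normSq_nonneg _)
      ⟨i, Finset.mem_univ i, Complex.normSq_pos.mpr hi⟩
  have him : q.im = 0 := by
    have := congrArg Complex.im hsq
    simp only [Complex.star_def, Complex.conj_im] at this
    linarith
  rw [hqz, hr] at him
  simp [Complex.mul_im] at him
  rcases him with h | h
  · exact hz h
  · linarith

theorem sherman_morrison_quadratic_form (p : ℕ) (C : Matrix (Fin p) (Fin p) ℝ)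
    (hC : C.PosSemidef) (x : Fin p → ℝ) (z : ℂ) (hz : 0 < z.im) :
    (1 + dotProduct (fun i => (x i : ℂ))
        (((C.map Complex.ofReal - z • (1 : Matrix (Fin p) (Fin p) ℂ))⁻¹).mulVec
          (fun i => (x i : ℂ))) ≠ 0) ∧
      dotProduct (fun i => (x i : ℂ))
          (((C.map Complex.ofReal +
              Matrix.vecMulVec (fun i => (x i : ℂ)) (fun i => (x i : ℂ)) -
              z • (1 : Matrix (Fin p) (Fin p) ℂ))⁻¹).mulVec (fun i => (x i : ℂ))) =
        (dotProduct (fun i => (x i : ℂ))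
            (((C.map Complex.ofReal - z • (1 : Matrix (Fin p) (Fin p) ℂ))⁻¹).mulVec
              (fun i => (x i : ℂ)))) /
          (1 + dotProduct (fun i => (x i : ℂ))
            (((C.map Complex.ofReal - z • (1 : Matrix (Fin p) (Fin p) ℂ))⁻¹).mulVec
              (fun i => (x i : ℂ)))) := by
  set xc : Fin p → ℂ := fun i => (x i : ℂ) with hxc
  set A : Matrix (Fin p) (Fin p) ℂ := C.map Complex.ofReal - z • 1 with hA
  set W : Matrix (Fin p) (Fin p) ℂ := vecMulVec xc xc with hW
  set B : Matrix (Fin p) (Fin p) ℂ := C.map Complex.ofReal + W - z • 1 with hB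
  set s : ℂ := xc ⬝ᵥ A⁻¹ *ᵥ xc with hs
  set d : ℂ := 1 + s with hd
  have hHA : (C.map Complex.ofReal).IsHermitian :=
    hC.1.map Complex.ofReal (fun a => (Complex.conj_ofReal a).symm)
  have hHW : W.IsHermitian := by
    ext i j
    simp [hW, conjTranspose_apply, vecMulVec_apply, hxc, Complex.conj_ofReal, mul_comm]
  have hdA : IsUnit A.det := herm_resolvent_det_isUnit hHA hz.ne'
  have hdB : IsUnit B.det := by
    have : B = (C.map Complex.ofReal + W) - z • 1 := by rw [hB]
    rw [this]
    exact herm_resolvent_det_isUnit (hHA.add hHW) hz.ne'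
  have hBA : B = A + W := by rw [hB, hA]; abel
  -- determinant identity
  have hdet : B.det = A.det * d := by
    rw [hBA, hW, vecMulVec_eq Unit, det_add_replicateCol_mul_replicateRow hdA, row_M_col, ← hs,
      smul_one_eq_diagonal]
    congr 1
    simp [Matrix.det_unique, Matrix.one_apply, hd]
  have hdne : d ≠ 0 := by
    intro h
    rw [h, mul_zero] at hdet
    exact (isUnit_iff_ne_zero.mp hdB) hdet
  have hAAinv : A * A⁻¹ = 1 := Matrix.mul_nonsing_inv _ hdA
  have hWAW : W * A⁻¹ * W = s • W := by
    rw [hW, sandwich, ← hs]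
  have hc : d⁻¹ + d⁻¹ * s = 1 := by
    calc d⁻¹ + d⁻¹ * s = d⁻¹ * (1 + s) := by ring
      _ = 1 := by rw [← hd, inv_mul_cancel₀ hdne]
  have hBinv : B⁻¹ = A⁻¹ - d⁻¹ • (A⁻¹ * W * A⁻¹) := by
    apply Matrix.inv_eq_right_inv
    have e1 : A * (A⁻¹ * W * A⁻¹) = W * A⁻¹ := by
      rw [← Matrix.mul_assoc, ← Matrix.mul_assoc, hAAinv, Matrix.one_mul]
    have e2 : W * (A⁻¹ * W * A⁻¹) = s • (W * A⁻¹) := by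
      calc W * (A⁻¹ * W * A⁻¹) = (W * A⁻¹ * W) * A⁻¹ := by
            simp only [Matrix.mul_assoc]
        _ = s • (W * A⁻¹) := by rw [hWAW, Matrix.smul_mul]
    rw [hBA, Matrix.add_mul, Matrix.mul_sub, Matrix.mul_sub, hAAinv,
      Matrix.mul_smul, Matrix.mul_smul, e1, e2, smul_smul]
    calc 1 - d⁻¹ • (W * A⁻¹) + (W * A⁻¹ - (d⁻¹ * s) • (W * A⁻¹))
        = 1 + ((1 : ℂ) • (W * A⁻¹) - (d⁻¹ • (W * A⁻¹) + (d⁻¹ * s) • (W * A⁻¹))) := by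
          rw [one_smul]; abel
      _ = 1 := by rw [← add_smul, ← sub_smul, hc, sub_self, zero_smul, add_zero]
  have hfin : xc ⬝ᵥ B⁻¹ *ᵥ xc = s / d := by
    have e3 : (A⁻¹ * W * A⁻¹) *ᵥ xc = s • (A⁻¹ *ᵥ xc) := by
      rw [← Matrix.mulVec_mulVec, ← Matrix.mulVec_mulVec, hW, vecMulVec_mulVec',
        ← hs, mulVec_smul]
    rw [hBinv, sub_mulVec, smul_mulVec, dotProduct_sub, dotProduct_smul, e3,
      dotProduct_smul, ← hs, smul_eq_mul, smul_eq_mul]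
    field_simp
    ring
  exact ⟨hdne, hfin⟩
end

section
/- Let z ∈ ℂ with Im(z) > 0 and c > 0. Then the quadratic equation zS² + (z - 1 + c)S + c = 0 has exactly one solution S ∈ ℂ with Im(S) ≥ 0. -/
lemma mp_root_ne (z S : ℂ) (c : ℝ) (hc : 0 < c)
    (heq : z * S ^ 2 + (z - 1 + (c : ℂ)) * S + (c : ℂ) = 0) : S ≠ 0 ∧ 1 + S ≠ 0 := by
  constructor
  · rintro rfl
    simp at heq
    exact hc.ne' heq
  · intro h
    have hS : S = -1 := by linear_combination h
    subst hS
    rw [show z * (-1:ℂ) ^ 2 + (z - 1 + (c:ℂ)) * (-1) + (c:ℂ) = 1 by ring] at heq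
    exact one_ne_zero heq

lemma mp_key (z S : ℂ) (c : ℝ)
    (heq : z * S ^ 2 + (z - 1 + (c : ℂ)) * S + (c : ℂ) = 0) :
    z.im * Complex.normSq S * Complex.normSq (1 + S)
      = S.im * (c * Complex.normSq (1 + S) - Complex.normSq S) := by
  have h1 := congrArg Complex.re heq
  have h2 := congrArg Complex.im heq
  simp [Complex.add_re, Complex.add_im, Complex.mul_re, Complex.mul_im, Complex.sub_re,
    Complex.sub_im, Complex.normSq_apply, pow_two] at h1 h2 ⊢
  ring_nf at h1 h2 ⊢
  linear_combination (S.re + S.re^2 - S.im^2) * h2 - (S.im * (1 + 2*S.re)) * h1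

lemma mp_sign (z S : ℂ) (c : ℝ) (hz : 0 < z.im) (hc : 0 < c)
    (heq : z * S ^ 2 + (z - 1 + (c : ℂ)) * S + (c : ℂ) = 0) :
    (0 ≤ S.im → 0 < S.im ∧ Complex.normSq S < c * Complex.normSq (1 + S)) ∧
    (S.im < 0 → c * Complex.normSq (1 + S) < Complex.normSq S) := by
  obtain ⟨h0, h1⟩ := mp_root_ne z S c hc heq
  have n1 : 0 < Complex.normSq S := Complex.normSq_pos.2 h0
  have n2 : 0 < Complex.normSq (1 + S) := Complex.normSq_pos.2 h1
  have key := mp_key z S c heq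
  have hL : 0 < S.im * (c * Complex.normSq (1 + S) - Complex.normSq S) := by
    rw [← key]; positivity
  constructor
  · intro h
    have hb : 0 < S.im := by
      rcases lt_or_eq_of_le h with h' | h'
      · exact h'
      · exfalso; rw [← h'] at hL; simp at hL
    refine ⟨hb, ?_⟩
    nlinarith
  · intro hb
    nlinarith

lemma mp_prod (z S T : ℂ) (c : ℝ) (hz : z ≠ 0)
    (hp : z * (S * T) = (c : ℂ)) (hs : z * (S + T) = 1 - (c : ℂ) - z) :
    Complex.normSq S * Complex.normSq T
      = c ^ 2 * (Complex.normSq (1 + S) * Complex.normSq (1 + T)) := by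
  have h : z * (S * T) = z * ((c : ℂ) * ((1 + S) * (1 + T))) := by
    linear_combination (1 - (c : ℂ)) * hp - (c : ℂ) * hs
  have h2 : S * T = (c : ℂ) * ((1 + S) * (1 + T)) := mul_left_cancel₀ hz h
  have := congrArg Complex.normSq h2
  simp only [map_mul, Complex.normSq_ofReal] at this
  rw [this]; ring

theorem mp_quadratic_unique_root (z : ℂ) (hz : 0 < z.im) (c : ℝ) (hc : 0 < c) :
    ∃! S : ℂ, z * S ^ 2 + (z - 1 + (c : ℂ)) * S + (c : ℂ) = 0 ∧ 0 ≤ S.im := by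
  have hz0 : z ≠ 0 := fun h => by simp [h] at hz
  -- existence
  obtain ⟨w, hw⟩ := IsAlgClosed.exists_pow_nat_eq (k := ℂ)
    ((z - 1 + (c:ℂ))^2 - 4 * z * c) zero_lt_two
  set Sp : ℂ := (-(z - 1 + (c:ℂ)) + w) / (2 * z) with hSp
  set Sm : ℂ := (-(z - 1 + (c:ℂ)) - w) / (2 * z) with hSm
  have heqp : z * Sp ^ 2 + (z - 1 + (c : ℂ)) * Sp + (c : ℂ) = 0 := by
    rw [hSp]; field_simp; linear_combination hw
  have heqm : z * Sm ^ 2 + (z - 1 + (c : ℂ)) * Sm + (c : ℂ) = 0 := by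
    rw [hSm]; field_simp; linear_combination hw
  have hp : z * (Sp * Sm) = (c : ℂ) := by
    rw [hSp, hSm]; field_simp; linear_combination -hw
  have hs : z * (Sp + Sm) = 1 - (c : ℂ) - z := by
    rw [hSp, hSm]; field_simp; ring
  have hex : ∃ S : ℂ, (z * S ^ 2 + (z - 1 + (c : ℂ)) * S + (c : ℂ) = 0 ∧ 0 ≤ S.im) := by
    by_cases h : 0 ≤ Sp.im
    · exact ⟨Sp, heqp, h⟩
    · push_neg at h
      by_cases h' : 0 ≤ Sm.im
      · exact ⟨Sm, heqm, h'⟩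
      · exfalso
        push_neg at h'
        have a1 := (mp_sign z Sp c hz hc heqp).2 h
        have a2 := (mp_sign z Sm c hz hc heqm).2 h'
        have e := mp_prod z Sp Sm c hz0 hp hs
        have n1p : 0 < Complex.normSq (1 + Sp) :=
          Complex.normSq_pos.2 (mp_root_ne z Sp c hc heqp).2
        have n1m : 0 < Complex.normSq (1 + Sm) :=
          Complex.normSq_pos.2 (mp_root_ne z Sm c hc heqm).2
        nlinarith [mul_lt_mul'' a1 a2 (by positivity : (0:ℝ) ≤ c * Complex.normSq (1 + Sp))
          (by positivity : (0:ℝ) ≤ c * Complex.normSq (1 + Sm))]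
  obtain ⟨S, hSeq, hSim⟩ := hex
  refine ⟨S, ⟨hSeq, hSim⟩, ?_⟩
  rintro T ⟨hTeq, hTim⟩
  by_contra hne
  have hd : T - S ≠ 0 := sub_ne_zero.2 hne
  have hsum : z * (T + S) = 1 - (c : ℂ) - z := by
    have h1 : (T - S) * (z * (T + S) - (1 - (c:ℂ) - z)) = 0 := by
      linear_combination hTeq - hSeq
    rcases mul_eq_zero.1 h1 with h | h
    · exact absurd h hd
    · linear_combination h
  have hprod : z * (T * S) = (c : ℂ) := by
    have h1 : (T - S) * (z * (T * S) - (c:ℂ)) = 0 := by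
      linear_combination S * hTeq - T * hSeq
    rcases mul_eq_zero.1 h1 with h | h
    · exact absurd h hd
    · linear_combination h
  have a1 := ((mp_sign z S c hz hc hSeq).1 hSim).2
  have a2 := ((mp_sign z T c hz hc hTeq).1 hTim).2
  have e := mp_prod z T S c hz0 hprod hsum
  have n1S : 0 < Complex.normSq S := Complex.normSq_pos.2 (mp_root_ne z S c hc hSeq).1
  have n1T : 0 < Complex.normSq T := Complex.normSq_pos.2 (mp_root_ne z T c hc hTeq).1
  nlinarith [mul_lt_mul'' a1 a2 n1S.le n1T.le]
end

section
/- Let z, w₁, w₂ ∈ ℂ with Im(z) = v > 0, and suppose Im(z + z w₁) ≥ v and Im(z + z w₂) ≥ v. Then |w₁/(1 + w₁) - w₂/(1 + w₂)| ≤ (|z|²/v²) |w₁ - w₂|. -/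
theorem mobius_lipschitz_bound (z w₁ w₂ : ℂ) (hz : 0 < z.im)
    (h1 : z.im ≤ (z + z * w₁).im) (h2 : z.im ≤ (z + z * w₂).im) :
    ‖w₁ / (1 + w₁) - w₂ / (1 + w₂)‖ ≤
      ‖z‖ ^ 2 / z.im ^ 2 * ‖w₁ - w₂‖ := by
  have hz0 : z ≠ 0 := by
    intro h; rw [h] at hz; simp at hz
  have hza : 0 < ‖z‖ := norm_pos_iff.mpr hz0
  have key : ∀ w : ℂ, z.im ≤ (z + z * w).im → z.im / ‖z‖ ≤ ‖1 + w‖ := by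
    intro w hw
    have h1' : z.im ≤ (z * (1 + w)).im := by rwa [mul_add, mul_one]
    have h2' : (z * (1 + w)).im ≤ ‖z * (1 + w)‖ := Complex.im_le_norm _
    rw [norm_mul] at h2'
    rw [div_le_iff₀ hza]
    calc z.im ≤ ‖z‖ * ‖1 + w‖ := le_trans h1' h2'
    _ = ‖1 + w‖ * ‖z‖ := mul_comm _ _
  have hb : 0 < z.im / ‖z‖ := by positivity
  have k1 := key w₁ h1
  have k2 := key w₂ h2
  have a1 : 0 < ‖1 + w₁‖ := lt_of_lt_of_le hb k1
  have a2 : 0 < ‖1 + w₂‖ := lt_of_lt_of_le hb k2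
  have n1 : (1 + w₁) ≠ 0 := by simpa using a1.ne'
  have n2 : (1 + w₂) ≠ 0 := by simpa using a2.ne'
  have hdiff : w₁ / (1 + w₁) - w₂ / (1 + w₂) = (w₁ - w₂) / ((1 + w₁) * (1 + w₂)) := by
    field_simp
    ring
  rw [hdiff, norm_div, norm_mul]
  rw [div_le_iff₀ (by positivity)]
  have hmul : (z.im / ‖z‖) * (z.im / ‖z‖) ≤
      ‖1 + w₁‖ * ‖1 + w₂‖ :=
    mul_le_mul k1 k2 hb.le a1.le
  calc ‖w₁ - w₂‖
      = ‖z‖ ^ 2 / z.im ^ 2 * ‖w₁ - w₂‖ *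
        ((z.im / ‖z‖) * (z.im / ‖z‖)) := by
        field_simp
    _ ≤ ‖z‖ ^ 2 / z.im ^ 2 * ‖w₁ - w₂‖ *
        (‖1 + w₁‖ * ‖1 + w₂‖) := by
        apply mul_le_mul_of_nonneg_left hmul
        positivity
end

section
/- For each p, let X_{p1},…,X_{pp} be independent real random variables with mean zero and variance one, and suppose that for every triangular array of real numbers a_k^{(p)} with |a_k^{(p)}| ≤ 1 one has (1/p) ∑_{k=1}^p a_k^{(p)}(X_{pk}² − 1) → 0 in probability as p → ∞. Then the Lindeberg condition holds: for all ε > 0, (1/p) ∑_{k=1}^p E[X_{pk}² · 1{|X_{pk}| > ε√p}] → 0 as p → ∞. -/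
open MeasureTheory ProbabilityTheory Filter
open scoped ENNReal

lemma aux_sum_max {ι : Type*} [DecidableEq ι] (s : Finset ι) (f : ι → ℝ) (t : ℝ) (ht : 0 ≤ t)
    (hf : ∀ i ∈ s, 0 ≤ f i) :
    ∑ i ∈ s, max (f i - t) 0 ≤ max (∑ i ∈ s, f i - t) 0 := by
  by_cases h : ∃ j ∈ s, t < f j
  · obtain ⟨j, hj, hjt⟩ := h
    have h1 : ∑ i ∈ s, max (f i - t) 0 = max (f j - t) 0 + ∑ i ∈ s.erase j, max (f i - t) 0 :=
      (Finset.add_sum_erase s _ hj).symm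
    have h2 : ∑ i ∈ s.erase j, max (f i - t) 0 ≤ ∑ i ∈ s.erase j, f i := by
      apply Finset.sum_le_sum
      intro i hi
      have h5 := hf i (Finset.mem_of_mem_erase hi)
      rcases le_or_gt (f i - t) 0 with h | h
      · rw [max_eq_right h]; exact h5
      · rw [max_eq_left h.le]; linarith
    have h3 : max (f j - t) 0 = f j - t := max_eq_left (by linarith)
    have h4 : f j + ∑ i ∈ s.erase j, f i = ∑ i ∈ s, f i := Finset.add_sum_erase s _ hj
    calc ∑ i ∈ s, max (f i - t) 0 ≤ (f j - t) + ∑ i ∈ s.erase j, f i := by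
          rw [h1, h3]; linarith
      _ = ∑ i ∈ s, f i - t := by linarith
      _ ≤ max (∑ i ∈ s, f i - t) 0 := le_max_left _ _
  · push_neg at h
    have : ∀ i ∈ s, max (f i - t) 0 = 0 := by
      intro i hi; exact max_eq_right (by linarith [h i hi])
    rw [Finset.sum_congr rfl this]
    simp

lemma aux_flip_card {p : ℕ} (c : Fin p → ℝ) (t : ℝ) (k₀ : Fin p)
    (hbig : 2 * t ≤ 2 / (p : ℝ) * |c k₀|) :
    2 ^ p ≤ 2 * (Finset.univ.filter (fun r : Fin p → Bool =>
      t ≤ |1 / (p : ℝ) * ∑ k, (if r k then (1:ℝ) else -1) * c k|)).card := by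
  classical
  set W : (Fin p → Bool) → ℝ :=
    fun r => 1 / (p : ℝ) * ∑ k, (if r k then (1:ℝ) else -1) * c k with hW
  set σ : (Fin p → Bool) → (Fin p → Bool) := fun r => Function.update r k₀ (!(r k₀)) with hσ
  have hσσ : ∀ r, σ (σ r) = r := by
    intro r
    funext k
    by_cases hk : k = k₀
    · subst hk; simp [hσ]
    · simp [hσ, Function.update_of_ne hk]
  have hdiff : ∀ r, 2 * t ≤ |W r - W (σ r)| := by
    intro r
    have h1 : W r - W (σ r)
        = 1 / (p : ℝ) * ∑ k, ((if r k then (1:ℝ) else -1) - (if σ r k then (1:ℝ) else -1)) * c k := by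
      rw [hW]
      rw [← mul_sub, ← Finset.sum_sub_distrib]
      congr 1
      apply Finset.sum_congr rfl
      intro k _
      ring
    have h2 : ∑ k, ((if r k then (1:ℝ) else -1) - (if σ r k then (1:ℝ) else -1)) * c k
        = ((if r k₀ then (1:ℝ) else -1) - (if !(r k₀) then (1:ℝ) else -1)) * c k₀ := by
      rw [← Function.update_self k₀ (!(r k₀)) r]
      apply Finset.sum_eq_single k₀
      · intro k _ hk
        simp [hσ, Function.update_of_ne hk]
      · simp
    rw [h1, h2]
    have h3 : |1 / (p:ℝ)| = 1 / (p:ℝ) := abs_of_nonneg (by positivity)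
    have h4 : 1/(p:ℝ) * (2 * |c k₀|) = 2/(p:ℝ) * |c k₀| := by ring
    have h3' : |((p:ℝ))⁻¹| = ((p:ℝ))⁻¹ := abs_of_nonneg (by positivity)
    have h4' : ((p:ℝ))⁻¹ * (2 * |c k₀|) = 2/(p:ℝ) * |c k₀| := by ring
    rcases Bool.eq_false_or_eq_true (r k₀) with hb | hb <;>
      · rw [hb]
        norm_num [abs_mul, h3, h3']
        linarith
  set S := Finset.univ.filter (fun r : Fin p → Bool => t ≤ |W r|) with hS
  set T := Finset.univ.filter (fun r : Fin p → Bool => ¬ (t ≤ |W r|)) with hT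
  have hmap : ∀ r ∈ T, σ r ∈ S := by
    intro r hr
    rw [hT, Finset.mem_filter] at hr
    rw [hS, Finset.mem_filter]
    refine ⟨Finset.mem_univ _, ?_⟩
    by_contra hc
    push_neg at hr hc
    have := hdiff r
    have habs : |W r - W (σ r)| ≤ |W r| + |W (σ r)| := abs_sub _ _
    linarith [hr.2, habs, this]
  have hinj : Set.InjOn σ T := by
    intro a _ b _ hab
    have := congrArg σ hab
    rwa [hσσ, hσσ] at this
  have hcard : T.card ≤ S.card := Finset.card_le_card_of_injOn σ hmap hinj
  have htot : S.card + T.card = 2 ^ p := by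
    rw [hS, hT, Finset.card_filter_add_card_filter_not]
    simp
  omega

set_option maxHeartbeats 1000000 in
theorem weighted_lln_implies_lindeberg
    {Ω : Type*} [MeasureSpace Ω] (μ : Measure Ω) [IsProbabilityMeasure μ]
    (X : (p : ℕ) → Fin p → Ω → ℝ)
    (hmeas : ∀ p k, Measurable (X p k))
    (hindep : ∀ p, iIndepFun (X p) μ)
    (hL2 : ∀ p k, MemLp (X p k) 2 μ)
    (hmean : ∀ p k, ∫ ω, X p k ω ∂μ = 0)
    (hvar : ∀ p k, ∫ ω, (X p k ω) ^ 2 ∂μ = 1)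
    (hlln : ∀ a : (p : ℕ) → Fin p → ℝ, (∀ p k, |a p k| ≤ 1) →
      TendstoInMeasure μ
        (fun p : ℕ => fun ω => (1 / (p : ℝ)) * ∑ k : Fin p, a p k * ((X p k ω) ^ 2 - 1))
        atTop (fun _ => (0 : ℝ))) :
    ∀ ε : ℝ, 0 < ε →
      Tendsto (fun p : ℕ =>
        (1 / (p : ℝ)) * ∑ k : Fin p,
          ∫ ω, (if ε * Real.sqrt p < |X p k ω| then (X p k ω) ^ 2 else 0) ∂μ)
        atTop (nhds 0) := by
  classical
  intro ε hε
  by_contra hcon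
  -- notation
  set I : (p : ℕ) → Fin p → ℝ := fun p k =>
    ∫ ω, (if ε * Real.sqrt p < |X p k ω| then (X p k ω) ^ 2 else 0) ∂μ with hI
  have hXsq : ∀ p k, Integrable (fun ω => (X p k ω) ^ 2) μ := fun p k => (hL2 p k).integrable_sq
  have hXsqmeas : ∀ p k, Measurable (fun ω => (X p k ω) ^ 2) := fun p k => (hmeas p k).pow_const 2
  have hsubint : ∀ p (k : Fin p), Integrable (fun ω => (X p k ω) ^ 2 - 1) μ := fun p k =>
    (hXsq p k).sub (integrable_const 1)
  set Z : ℕ → Ω → ℝ := fun p ω => 1 / (p : ℝ) * ∑ k : Fin p, ((X p k ω) ^ 2 - 1) with hZ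
  have hZmeas : ∀ p, Measurable (Z p) := by
    intro p
    exact (Finset.measurable_sum Finset.univ
      (fun k _ => (hXsqmeas p k).sub measurable_const)).const_mul _
  have hZint : ∀ p, Integrable (Z p) μ := by
    intro p
    exact (integrable_finset_sum Finset.univ
      (fun k _ => (hXsq p k).sub (integrable_const 1))).const_mul _
  have hZmean : ∀ p, ∫ ω, Z p ω ∂μ = 0 := by
    intro p
    have h1 : ∫ ω, Z p ω ∂μ = 1/(p:ℝ) * ∫ ω, (∑ k : Fin p, ((X p k ω)^2 - 1)) ∂μ :=
      integral_const_mul _ _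
    rw [h1, integral_finset_sum Finset.univ (fun k _ => hsubint p k)]
    have h2 : ∀ k ∈ Finset.univ, ∫ ω, ((X p k ω)^2 - (1:ℝ)) ∂μ = 0 := by
      intro k _
      rw [integral_sub (hXsq p k) (integrable_const 1), hvar p k, integral_const]
      simp
    rw [Finset.sum_congr rfl h2]
    simp
  have hZlow : ∀ p ω, -1 ≤ Z p ω := by
    intro p ω
    rcases Nat.eq_zero_or_pos p with hp | hp
    · subst hp; simp [hZ]
    · have hp' : (0:ℝ) < p := by exact_mod_cast hp
      have h1 : (-(p:ℝ)) ≤ ∑ k : Fin p, ((X p k ω)^2 - 1) := by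
        calc (-(p:ℝ)) = ∑ _k : Fin p, (-1 : ℝ) := by simp
          _ ≤ _ := Finset.sum_le_sum fun k _ => by nlinarith [sq_nonneg (X p k ω)]
      have h2 : 1/(p:ℝ) * (-(p:ℝ)) ≤ Z p ω :=
        mul_le_mul_of_nonneg_left h1 (by positivity)
      calc (-1:ℝ) = 1/(p:ℝ) * (-(p:ℝ)) := by field_simp
        _ ≤ Z p ω := h2
  have hZtm : TendstoInMeasure μ Z atTop (fun _ => (0 : ℝ)) := by
    have h := hlln (fun _ _ => (1:ℝ)) (fun p k => by norm_num)
    have he : (fun p : ℕ => fun ω => (1 / (p : ℝ)) * ∑ k : Fin p, (1:ℝ) * ((X p k ω)^2 - 1))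
        = Z := by
      funext p ω; simp [hZ]
    rwa [he] at h
  have hZposint : ∀ p, Integrable (fun ω => max (Z p ω) 0) μ := fun p => (hZint p).pos_part
  have hZnegint : ∀ p, Integrable (fun ω => max (-(Z p ω)) 0) μ := fun p => (hZint p).neg.pos_part
  have hbal : ∀ p, ∫ ω, max (Z p ω) 0 ∂μ = ∫ ω, max (-(Z p ω)) 0 ∂μ := by
    intro p
    have h1 : ∫ ω, (max (Z p ω) 0 - max (-(Z p ω)) 0) ∂μ = ∫ ω, Z p ω ∂μ := by
      congr 1; funext ω; exact max_zero_sub_max_neg_zero_eq_self _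
    rw [integral_sub (hZposint p) (hZnegint p), hZmean p] at h1
    linarith
  have hZnegbd : ∀ p, ∀ t : ℝ, 0 < t →
      ∫ ω, max (-(Z p ω)) 0 ∂μ ≤ t + (μ {ω | t ≤ dist (Z p ω) 0}).toReal := by
    intro p t ht
    set s : Set Ω := {ω | t ≤ dist (Z p ω) 0} with hs
    have hsm : MeasurableSet s :=
      measurableSet_le measurable_const ((hZmeas p).dist measurable_const)
    have hpw : ∀ ω, max (-(Z p ω)) 0 ≤ t + s.indicator (fun _ => (1:ℝ)) ω := by
      intro ω
      by_cases hω : ω ∈ s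
      · rw [Set.indicator_of_mem hω]
        have h3 := hZlow p ω
        have h4 : max (-(Z p ω)) 0 ≤ 1 := max_le (by linarith) (by norm_num)
        linarith
      · rw [Set.indicator_of_notMem hω]
        have hd : dist (Z p ω) 0 < t := by
          simp only [hs, Set.mem_setOf_eq, not_le] at hω
          exact hω
        rw [Real.dist_eq, sub_zero] at hd
        have h5 : -(Z p ω) ≤ |Z p ω| := neg_le_abs _
        have h6 : max (-(Z p ω)) 0 ≤ t := max_le (by linarith) (by linarith)
        linarith
    have hint : Integrable (fun ω => t + s.indicator (fun _ => (1:ℝ)) ω) μ :=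
      (integrable_const t).add ((integrable_const (1:ℝ)).indicator hsm)
    calc ∫ ω, max (-(Z p ω)) 0 ∂μ ≤ ∫ ω, (t + s.indicator (fun _ => (1:ℝ)) ω) ∂μ :=
        integral_mono (hZnegint p) hint hpw
      _ = t + (μ s).toReal := by
        rw [integral_add (integrable_const t) ((integrable_const (1:ℝ)).indicator hsm),
          integral_const, integral_indicator_const (1:ℝ) hsm]
        simp [measureReal_def]
  -- extract δ
  have hInonneg : ∀ p k, 0 ≤ I p k := by
    intro p k
    apply integral_nonneg
    intro ω
    by_cases h : ε * Real.sqrt p < |X p k ω| <;> simp [h, sq_nonneg]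
  have hLnonneg : ∀ p : ℕ, 0 ≤ 1 / (p : ℝ) * ∑ k : Fin p, I p k := fun p =>
    mul_nonneg (by positivity) (Finset.sum_nonneg fun k _ => hInonneg p k)
  obtain ⟨δ, hδ, hfreq⟩ : ∃ δ > 0, ∃ᶠ p : ℕ in atTop, δ ≤ 1 / (p : ℝ) * ∑ k : Fin p, I p k := by
    rw [NormedAddCommGroup.tendsto_nhds_zero] at hcon
    push_neg at hcon
    obtain ⟨δ, hδ, hbad⟩ := hcon
    refine ⟨δ, hδ, ?_⟩
    apply hbad.mono
    intro p hp
    calc δ ≤ ‖1 / (p : ℝ) * ∑ k : Fin p, I p k‖ := hp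
      _ = 1 / (p : ℝ) * ∑ k : Fin p, I p k := by
        rw [Real.norm_eq_abs, abs_of_nonneg (hLnonneg p)]
  set M : ℝ := (ε^2 + 4)/2 with hM
  have hM1 : 1 ≤ M := by rw [hM]; nlinarith [sq_nonneg ε]
  have hM0 : 0 < M := by linarith
  set c₁ : ℝ := 1 - Real.exp (-(δ/(4*M))) with hc₁def
  have hc₁ : 0 < c₁ := by
    rw [hc₁def]
    have h1 : Real.exp (-(δ/(4*M))) < 1 := by
      rw [Real.exp_lt_one_iff]
      have : 0 < δ/(4*M) := by positivity
      linarith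
    linarith
  set t : ℝ := ε^2/2 with htdef
  have ht0 : 0 < t := by rw [htdef]; positivity
  set p₀ : ℕ := max 1 ⌈(2:ℝ)/ε^2⌉₊ with hp₀
  set D : (p : ℕ) → Fin p → Set Ω := fun p k => {ω | ε * Real.sqrt p < |X p k ω|} with hD
  have hDmeas : ∀ p k, MeasurableSet (D p k) :=
    fun p k => measurableSet_lt measurable_const (hmeas p k).abs
  set q : (p : ℕ) → Fin p → ℝ := fun p k => (μ (D p k)).toReal with hq
  have hev : ∀ᶠ p : ℕ in atTop, ∫ ω, max (-(Z p ω)) 0 ∂μ ≤ δ/4 := by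
    have h8 : (0:ℝ) < δ/8 := by linarith
    have h := tendstoInMeasure_iff_dist.mp hZtm (δ/8) h8
    have hlt : ∀ᶠ p : ℕ in atTop,
        μ {x | δ/8 ≤ dist (Z p x) ((fun _ => (0:ℝ)) x)} < ENNReal.ofReal (δ/8) :=
      h.eventually_lt_const (by simp [ENNReal.ofReal_pos]; linarith)
    apply hlt.mono
    intro p hp
    have h2 := hZnegbd p (δ/8) h8
    have h3 : (μ {ω | δ/8 ≤ dist (Z p ω) 0}).toReal ≤ δ/8 :=
      ENNReal.toReal_le_of_le_ofReal (by linarith) hp.le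
    linarith
  have hmain : ∃ᶠ p : ℕ in atTop, ∃ r : Fin p → ℝ, (∀ k, |r k| ≤ 1) ∧
      ENNReal.ofReal (c₁/2) ≤
        μ {ω | t ≤ dist (1 / (p:ℝ) * ∑ k : Fin p, r k * ((X p k ω)^2 - 1)) 0} := by
    have hco := hfreq.and_eventually (hev.and (eventually_ge_atTop p₀))
    apply hco.mono
    rintro p ⟨hLp, hneg, hpp₀⟩
    have hp1 : 1 ≤ p := le_trans (le_max_left _ _) hpp₀
    have hpR : (1:ℝ) ≤ (p:ℝ) := by exact_mod_cast hp1
    have hppos : (0:ℝ) < p := by linarith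
    have hε2p : 2 ≤ ε^2 * p := by
      have h1 : ((2:ℝ)/ε^2) ≤ (⌈(2:ℝ)/ε^2⌉₊ : ℝ) := Nat.le_ceil _
      have h2 : (⌈(2:ℝ)/ε^2⌉₊ : ℕ) ≤ p := le_trans (le_max_right _ _) hpp₀
      have h3 : ((⌈(2:ℝ)/ε^2⌉₊ : ℕ) : ℝ) ≤ p := by exact_mod_cast h2
      have h4 : (2:ℝ)/ε^2 ≤ p := le_trans h1 h3
      have h5 : 0 < ε^2 := by positivity
      calc (2:ℝ) = (2/ε^2) * ε^2 := by field_simp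
        _ ≤ (p:ℝ) * ε^2 := by gcongr
        _ = ε^2 * p := by ring
    have hite2int : ∀ k : Fin p,
        Integrable (fun ω => if 2*M*(p:ℝ) < (X p k ω)^2 then (X p k ω)^2 else 0) μ := by
      intro k
      apply Integrable.mono' (hXsq p k)
      · exact (Measurable.ite (measurableSet_lt measurable_const (hXsqmeas p k))
          (hXsqmeas p k) measurable_const).aestronglyMeasurable
      · filter_upwards with ω
        by_cases h : 2*M*(p:ℝ) < (X p k ω)^2 <;>
          simp [h, Real.norm_eq_abs, abs_of_nonneg (sq_nonneg (X p k ω)), sq_nonneg]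
    have hA1 : ∀ k : Fin p, I p k ≤ 2*M*(p:ℝ) * q p k
        + ∫ ω, (if 2*M*(p:ℝ) < (X p k ω)^2 then (X p k ω)^2 else 0) ∂μ := by
      intro k
      have hint1 : Integrable (fun ω => if ε * Real.sqrt p < |X p k ω| then (X p k ω)^2 else 0) μ := by
        apply Integrable.mono' (hXsq p k)
        · exact (Measurable.ite (measurableSet_lt measurable_const (hmeas p k).abs)
            (hXsqmeas p k) measurable_const).aestronglyMeasurable
        · filter_upwards with ω
          by_cases h : ε * Real.sqrt p < |X p k ω| <;>
            simp [h, Real.norm_eq_abs, abs_of_nonneg (sq_nonneg (X p k ω)), sq_nonneg]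
      have hintInd : Integrable ((D p k).indicator (fun _ => 2*M*(p:ℝ))) μ :=
        (integrable_const _).indicator (hDmeas p k)
      have hrhs : Integrable (fun ω => (D p k).indicator (fun _ => 2*M*(p:ℝ)) ω
          + (if 2*M*(p:ℝ) < (X p k ω)^2 then (X p k ω)^2 else 0)) μ := hintInd.add (hite2int k)
      have hpw : ∀ ω, (if ε * Real.sqrt p < |X p k ω| then (X p k ω)^2 else 0)
          ≤ (D p k).indicator (fun _ => 2*M*(p:ℝ)) ω
            + (if 2*M*(p:ℝ) < (X p k ω)^2 then (X p k ω)^2 else 0) := by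
        intro ω
        by_cases hω : ε * Real.sqrt p < |X p k ω|
        · have hmem : ω ∈ D p k := hω
          rw [Set.indicator_of_mem hmem, if_pos hω]
          by_cases h2 : 2*M*(p:ℝ) < (X p k ω)^2
          · rw [if_pos h2]; nlinarith
          · rw [if_neg h2]; push_neg at h2; linarith
        · have hmem : ω ∉ D p k := hω
          rw [Set.indicator_of_notMem hmem, if_neg hω]
          by_cases h2 : 2*M*(p:ℝ) < (X p k ω)^2 <;> simp [h2, sq_nonneg]
      have hmono := integral_mono hint1 hrhs hpw
      rw [integral_add hintInd (hite2int k),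
        integral_indicator_const _ (hDmeas p k), smul_eq_mul, measureReal_def] at hmono
      have hqk : q p k = (μ (D p k)).toReal := rfl
      rw [hqk]
      have hIk : I p k = ∫ ω, (if ε * Real.sqrt p < |X p k ω| then (X p k ω)^2 else 0) ∂μ := rfl
      rw [hIk]
      linarith [hmono]
    have hA3 : ∀ ω, ∑ k : Fin p, (if 2*M*(p:ℝ) < (X p k ω)^2 then (X p k ω)^2 else 0)
        ≤ 2*(p:ℝ) * max (Z p ω) 0 := by
      intro ω
      have s1 : ∀ k : Fin p, (if 2*M*(p:ℝ) < (X p k ω)^2 then (X p k ω)^2 else 0)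
          ≤ 2 * max ((X p k ω)^2 - M*(p:ℝ)) 0 := by
        intro k
        by_cases h : 2*M*(p:ℝ) < (X p k ω)^2
        · rw [if_pos h]
          have h1 : 0 ≤ (X p k ω)^2 - M*(p:ℝ) := by nlinarith
          rw [max_eq_left h1]
          nlinarith
        · rw [if_neg h]; positivity
      have s2 : ∑ k : Fin p, max ((X p k ω)^2 - M*(p:ℝ)) 0
          ≤ max (∑ k : Fin p, (X p k ω)^2 - M*(p:ℝ)) 0 :=
        aux_sum_max Finset.univ (fun k => (X p k ω)^2) (M*(p:ℝ)) (by positivity)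
          (fun k _ => sq_nonneg _)
      have s3 : max (∑ k : Fin p, (X p k ω)^2 - M*(p:ℝ)) 0
          ≤ max (∑ k : Fin p, (X p k ω)^2 - (p:ℝ)) 0 := by
        have hMp : (p:ℝ) ≤ M*(p:ℝ) := le_mul_of_one_le_left hppos.le hM1
        exact max_le_max (by linarith) le_rfl
      have s4 : ∑ k : Fin p, (X p k ω)^2 - (p:ℝ) = ∑ k : Fin p, ((X p k ω)^2 - 1) := by
        rw [Finset.sum_sub_distrib]
        simp
      have s5 : (p:ℝ) * Z p ω = ∑ k : Fin p, ((X p k ω)^2 - 1) := by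
        have hzz : Z p ω = 1/(p:ℝ) * ∑ k : Fin p, ((X p k ω)^2 - 1) := rfl
        rw [hzz, ← mul_assoc]
        have hc : (p:ℝ) * (1/(p:ℝ)) = 1 := by field_simp
        rw [hc, one_mul]
      have s6 : max ((p:ℝ) * Z p ω) 0 = (p:ℝ) * max (Z p ω) 0 := by
        rw [mul_max_of_nonneg _ _ (le_of_lt hppos), mul_zero]
      calc ∑ k : Fin p, (if 2*M*(p:ℝ) < (X p k ω)^2 then (X p k ω)^2 else 0)
          ≤ ∑ k : Fin p, 2 * max ((X p k ω)^2 - M*(p:ℝ)) 0 :=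
            Finset.sum_le_sum (fun k _ => s1 k)
        _ = 2 * ∑ k : Fin p, max ((X p k ω)^2 - M*(p:ℝ)) 0 := by rw [Finset.mul_sum]
        _ ≤ 2 * max (∑ k : Fin p, (X p k ω)^2 - (p:ℝ)) 0 := by linarith [s2, s3]
        _ = 2 * ((p:ℝ) * max (Z p ω) 0) := by rw [s4, ← s5, s6]
        _ = 2*(p:ℝ) * max (Z p ω) 0 := by ring
    have hA2 : ∑ k : Fin p, ∫ ω, (if 2*M*(p:ℝ) < (X p k ω)^2 then (X p k ω)^2 else 0) ∂μ
        ≤ 2*(p:ℝ) * (δ/4) := by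
      have h1 : ∑ k : Fin p, ∫ ω, (if 2*M*(p:ℝ) < (X p k ω)^2 then (X p k ω)^2 else 0) ∂μ
          = ∫ ω, (∑ k : Fin p, if 2*M*(p:ℝ) < (X p k ω)^2 then (X p k ω)^2 else 0) ∂μ :=
        (integral_finset_sum Finset.univ (fun k _ => hite2int k)).symm
      have h2 : ∫ ω, (∑ k : Fin p, if 2*M*(p:ℝ) < (X p k ω)^2 then (X p k ω)^2 else 0) ∂μ
          ≤ ∫ ω, 2*(p:ℝ) * max (Z p ω) 0 ∂μ :=
        integral_mono (integrable_finset_sum _ (fun k _ => hite2int k))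
          ((hZposint p).const_mul _) hA3
      have h3 : ∫ ω, 2*(p:ℝ) * max (Z p ω) 0 ∂μ = 2*(p:ℝ) * ∫ ω, max (Z p ω) 0 ∂μ :=
        integral_const_mul _ _
      have h4 : ∫ ω, max (Z p ω) 0 ∂μ ≤ δ/4 := by rw [hbal p]; exact hneg
      rw [h1]
      calc ∫ ω, (∑ k : Fin p, if 2*M*(p:ℝ) < (X p k ω)^2 then (X p k ω)^2 else 0) ∂μ
          ≤ 2*(p:ℝ) * ∫ ω, max (Z p ω) 0 ∂μ := by rw [← h3]; exact h2
        _ ≤ 2*(p:ℝ) * (δ/4) := by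
            apply mul_le_mul_of_nonneg_left h4 (by positivity)
    have hsq : δ/(4*M) ≤ ∑ k : Fin p, q p k := by
      have hS : ∑ k : Fin p, I p k ≤ ∑ k : Fin p, (2*M*(p:ℝ) * q p k
          + ∫ ω, (if 2*M*(p:ℝ) < (X p k ω)^2 then (X p k ω)^2 else 0) ∂μ) :=
        Finset.sum_le_sum (fun k _ => hA1 k)
      rw [Finset.sum_add_distrib] at hS
      have h1 : ∑ k : Fin p, I p k ≤ 2*M*(p:ℝ) * (∑ k : Fin p, q p k) + 2*(p:ℝ)*(δ/4) := by
        rw [← Finset.mul_sum] at hS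
        linarith [hA2]
      have h2 : δ ≤ 1/(p:ℝ) * (2*M*(p:ℝ) * (∑ k : Fin p, q p k) + 2*(p:ℝ)*(δ/4)) := by
        refine le_trans hLp ?_
        exact mul_le_mul_of_nonneg_left h1 (by positivity)
      have h3 : 1/(p:ℝ) * (2*M*(p:ℝ) * (∑ k : Fin p, q p k) + 2*(p:ℝ)*(δ/4))
          = 2*M*(∑ k : Fin p, q p k) + δ/2 := by
        field_simp
        ring
      rw [h3] at h2
      rw [div_le_iff₀ (show (0:ℝ) < 4*M by positivity)]
      nlinarith [h2]
    have hE : c₁ ≤ (μ (⋃ k, D p k)).toReal := by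
      have hcompl : μ (⋂ k, (D p k)ᶜ) = ∏ k, μ ((D p k)ᶜ) := by
        apply (hindep p).meas_iInter
        intro k
        exact ⟨{x : ℝ | ε * Real.sqrt p < |x|}ᶜ,
          (measurableSet_lt measurable_const measurable_abs).compl, rfl⟩
      have hpc : ∀ k : Fin p, (μ ((D p k)ᶜ)).toReal = 1 - q p k := by
        intro k
        have h1 : μ (D p k) + μ ((D p k)ᶜ) = 1 := by
          rw [measure_add_measure_compl (hDmeas p k)]
          exact measure_univ
        have h2 := congrArg ENNReal.toReal h1
        rw [ENNReal.toReal_add (measure_ne_top μ _) (measure_ne_top μ _)] at h2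
        simp only [ENNReal.toReal_one] at h2
        have hqk : q p k = (μ (D p k)).toReal := rfl
        rw [hqk]
        linarith
      have hprod : (μ (⋂ k, (D p k)ᶜ)).toReal = ∏ k : Fin p, (1 - q p k) := by
        rw [hcompl, ENNReal.toReal_prod]
        exact Finset.prod_congr rfl (fun k _ => hpc k)
      have hexpb : ∏ k : Fin p, (1 - q p k) ≤ Real.exp (-(δ/(4*M))) := by
        have e1 : ∏ k : Fin p, (1 - q p k) ≤ ∏ k : Fin p, Real.exp (-(q p k)) := by
          apply Finset.prod_le_prod
          · intro k _
            have := hpc k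
            have h0 : 0 ≤ (μ ((D p k)ᶜ)).toReal := ENNReal.toReal_nonneg
            linarith
          · intro k _
            have := Real.add_one_le_exp (-(q p k))
            linarith
        have e2 : ∏ k : Fin p, Real.exp (-(q p k)) = Real.exp (∑ k : Fin p, -(q p k)) :=
          (Real.exp_sum _ _).symm
        have e3 : Real.exp (∑ k : Fin p, -(q p k)) ≤ Real.exp (-(δ/(4*M))) := by
          apply Real.exp_le_exp.mpr
          rw [Finset.sum_neg_distrib]
          linarith [hsq]
        calc ∏ k : Fin p, (1 - q p k) ≤ ∏ k : Fin p, Real.exp (-(q p k)) := e1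
          _ = Real.exp (∑ k : Fin p, -(q p k)) := e2
          _ ≤ Real.exp (-(δ/(4*M))) := e3
      have hUm : MeasurableSet (⋃ k, D p k) := MeasurableSet.iUnion (fun k => hDmeas p k)
      have hcap : (⋃ k, D p k)ᶜ = ⋂ k, (D p k)ᶜ := by
        rw [Set.compl_iUnion]
      have h2 : μ (⋃ k, D p k) + μ ((⋃ k, D p k)ᶜ) = 1 := by
        rw [measure_add_measure_compl hUm]
        exact measure_univ
      have h3 := congrArg ENNReal.toReal h2
      rw [ENNReal.toReal_add (measure_ne_top μ _) (measure_ne_top μ _), hcap] at h3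
      simp only [ENNReal.toReal_one] at h3
      rw [hc₁def]
      rw [hprod] at h3
      linarith
    obtain ⟨r, hr⟩ : ∃ r : Fin p → Bool, ENNReal.ofReal (c₁/2) ≤
        μ {ω | t ≤ |1/(p:ℝ) * ∑ k : Fin p, (if r k then (1:ℝ) else -1) * ((X p k ω)^2 - 1)|} := by
      set A : (Fin p → Bool) → Set Ω := fun r =>
        {ω | t ≤ |1/(p:ℝ) * ∑ k : Fin p, (if r k then (1:ℝ) else -1) * ((X p k ω)^2 - 1)|}
        with hA
      have hAmeas : ∀ r, MeasurableSet (A r) := by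
        intro r
        apply measurableSet_le measurable_const
        exact (Measurable.const_mul (Finset.measurable_sum Finset.univ
          (fun k _ => ((hXsqmeas p k).sub measurable_const).const_mul _)) _).abs
      have hUm : MeasurableSet (⋃ k, D p k) := MeasurableSet.iUnion (fun k => hDmeas p k)
      have hcount : ∀ ω ∈ ⋃ k, D p k,
          2^p ≤ 2 * (Finset.univ.filter (fun r : Fin p → Bool => ω ∈ A r)).card := by
        intro ω hω
        rw [Set.mem_iUnion] at hω
        obtain ⟨k₀, hk₀⟩ := hω
        have hx : ε * Real.sqrt p < |X p k₀ ω| := hk₀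
        have hx2 : ε^2 * (p:ℝ) < (X p k₀ ω)^2 := by
          have h2 : 0 ≤ ε * Real.sqrt p := by positivity
          have h3 : (ε * Real.sqrt p)^2 < |X p k₀ ω|^2 := pow_lt_pow_left₀ hx h2 two_ne_zero
          rwa [mul_pow, Real.sq_sqrt (Nat.cast_nonneg p), sq_abs] at h3
        have hbig : 2 * t ≤ 2/(p:ℝ) * |(X p k₀ ω)^2 - 1| := by
          have hc1 : ε^2*(p:ℝ)/2 ≤ (X p k₀ ω)^2 - 1 := by nlinarith
          have hcpos : 0 ≤ (X p k₀ ω)^2 - 1 := by nlinarith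
          rw [abs_of_nonneg hcpos, htdef]
          have h4 : 2/(p:ℝ) * (ε^2*(p:ℝ)/2) = ε^2 := by field_simp
          have h5 : (0:ℝ) < 2/(p:ℝ) := by positivity
          nlinarith
        have hflip := aux_flip_card (fun k => (X p k ω)^2 - 1) t k₀ hbig
        have hfe : (Finset.univ.filter (fun r : Fin p → Bool =>
              t ≤ |1 / (p:ℝ) * ∑ k : Fin p, (if r k then (1:ℝ) else -1) * ((X p k ω)^2 - 1)|))
            = (Finset.univ.filter (fun r : Fin p → Bool => ω ∈ A r)) :=
          Finset.filter_congr (fun r _ => Iff.rfl)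
        rw [hfe] at hflip
        exact hflip
      have hsum : (2:ℝ≥0∞)^(p-1) * μ (⋃ k, D p k) ≤ ∑ r : Fin p → Bool, μ (A r) := by
        have e1 : ∀ r : Fin p → Bool,
            μ (A r) = ∫⁻ ω, (A r).indicator (fun _ => (1:ℝ≥0∞)) ω ∂μ := by
          intro r
          rw [lintegral_indicator_const (hAmeas r), one_mul]
        calc (2:ℝ≥0∞)^(p-1) * μ (⋃ k, D p k)
            = ∫⁻ ω, (⋃ k, D p k).indicator (fun _ => (2:ℝ≥0∞)^(p-1)) ω ∂μ := by
              rw [lintegral_indicator_const hUm]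
          _ ≤ ∫⁻ ω, ∑ r : Fin p → Bool, (A r).indicator (fun _ => (1:ℝ≥0∞)) ω ∂μ := by
              apply lintegral_mono
              intro ω
              by_cases hω : ω ∈ ⋃ k, D p k
              · rw [Set.indicator_of_mem hω]
                have hc := hcount ω hω
                have h2p : (2:ℕ)^p = 2 * 2^(p-1) := by
                  conv_lhs => rw [show p = (p-1)+1 by omega]
                  rw [pow_succ]
                  ring
                have hcard2 : 2^(p-1) ≤
                    (Finset.univ.filter (fun r : Fin p → Bool => ω ∈ A r)).card := by omega
                have h2 : ∑ r : Fin p → Bool, (A r).indicator (fun _ => (1:ℝ≥0∞)) ω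
                    = ((Finset.univ.filter (fun r : Fin p → Bool => ω ∈ A r)).card : ℝ≥0∞) := by
                  simp [Set.indicator_apply]
                show (2:ℝ≥0∞)^(p-1) ≤ ∑ r : Fin p → Bool, (A r).indicator (fun _ => (1:ℝ≥0∞)) ω
                rw [h2]
                calc (2:ℝ≥0∞)^(p-1) = ((2^(p-1) : ℕ) : ℝ≥0∞) := by push_cast; ring
                  _ ≤ _ := by exact_mod_cast hcard2
              · rw [Set.indicator_of_notMem hω]
                exact zero_le
          _ = ∑ r : Fin p → Bool, μ (A r) := by
              rw [lintegral_finset_sum]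
              · exact Finset.sum_congr rfl (fun r _ => (e1 r).symm)
              · exact fun r _ => measurable_const.indicator (hAmeas r)
      by_contra hno
      push_neg at hno
      have hFlt : ∀ r : Fin p → Bool, (μ (A r)).toReal < c₁/2 := by
        intro r
        have h1 := hno r
        have h2 := (ENNReal.toReal_lt_toReal (measure_ne_top μ _) ENNReal.ofReal_ne_top).mpr h1
        rwa [ENNReal.toReal_ofReal (div_nonneg hc₁.le (by norm_num))] at h2
      have hsumfin : ∑ r : Fin p → Bool, μ (A r) ≠ ⊤ := by
        refine ne_of_lt ?_
        exact ENNReal.sum_lt_top.mpr (fun r _ => measure_lt_top μ _)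
      have hR := ENNReal.toReal_mono hsumfin hsum
      rw [ENNReal.toReal_mul, ENNReal.toReal_pow,
        ENNReal.toReal_sum (fun r _ => measure_ne_top μ _), ENNReal.toReal_ofNat] at hR
      have hlt : ∑ r : Fin p → Bool, (μ (A r)).toReal < (2:ℝ)^p * (c₁/2) := by
        have hcard : (Finset.univ : Finset (Fin p → Bool)).card = 2^p := by simp
        calc ∑ r : Fin p → Bool, (μ (A r)).toReal
            < ∑ _r : Fin p → Bool, c₁/2 :=
              Finset.sum_lt_sum_of_nonempty Finset.univ_nonempty (fun r _ => hFlt r)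
          _ = ((2^p : ℕ) : ℝ) * (c₁/2) := by
              rw [Finset.sum_const, hcard, nsmul_eq_mul]
          _ = (2:ℝ)^p * (c₁/2) := by push_cast; ring
      have h2pR : (2:ℝ)^p = 2 * (2:ℝ)^(p-1) := by
        conv_lhs => rw [show p = (p-1)+1 by omega]
        rw [pow_succ]
        ring
      have hmul : (2:ℝ)^(p-1) * c₁ ≤ (2:ℝ)^(p-1) * (μ (⋃ k, D p k)).toReal :=
        mul_le_mul_of_nonneg_left hE (pow_nonneg (by norm_num) _)
      have he : (2:ℝ)^p * (c₁/2) = (2:ℝ)^(p-1) * c₁ := by rw [h2pR]; ring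
      rw [he] at hlt
      linarith [hmul, hR, hlt]
    refine ⟨fun k => if r k then (1:ℝ) else -1, fun k => by by_cases h : r k <;> simp [h], ?_⟩
    have hseteq : {ω | t ≤ dist (1 / (p:ℝ) *
          ∑ k : Fin p, (if r k then (1:ℝ) else -1) * ((X p k ω)^2 - 1)) 0}
        = {ω | t ≤ |1/(p:ℝ) * ∑ k : Fin p, (if r k then (1:ℝ) else -1) * ((X p k ω)^2 - 1)|} := by
      ext ω; simp only [Set.mem_setOf_eq, Real.dist_eq, sub_zero]
    rw [hseteq]
    exact hr
  set P : (p : ℕ) → (Fin p → ℝ) → Prop := fun p r => (∀ k, |r k| ≤ 1) ∧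
      ENNReal.ofReal (c₁/2) ≤
        μ {ω | t ≤ dist (1 / (p:ℝ) * ∑ k : Fin p, r k * ((X p k ω)^2 - 1)) 0} with hP
  set a : (p : ℕ) → Fin p → ℝ := fun p => if h : ∃ r, P p r then h.choose else fun _ => 1
    with hadef
  have ha1 : ∀ p k, |a p k| ≤ 1 := by
    intro p k
    rw [hadef]
    by_cases h : ∃ r, P p r
    · simp only [dif_pos h]; exact h.choose_spec.1 k
    · simp only [dif_neg h]; norm_num
  have htm := tendstoInMeasure_iff_dist.mp (hlln a ha1) t ht0
  have hevsmall : ∀ᶠ p : ℕ in atTop,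
      μ {x | t ≤ dist (1 / (p:ℝ) * ∑ k : Fin p, a p k * ((X p k x)^2 - 1)) ((fun _ => (0:ℝ)) x)}
        < ENNReal.ofReal (c₁/2) :=
    htm.eventually_lt_const (by simp [ENNReal.ofReal_pos]; linarith)
  obtain ⟨p, hex, hsmall⟩ := (hmain.and_eventually hevsmall).exists
  have hexP : ∃ r, P p r := hex
  have hgood : P p (a p) := by
    rw [hadef]
    simp only [dif_pos hexP]
    exact hexP.choose_spec
  exact absurd hgood.2 (not_le.mpr hsmall)
end

section
/- Let (S_n) be a bounded sequence of complex numbers with Im(S_n) > 0 satisfying S_n/(1+S_n) − z S_n = c + o(1) as n → ∞, where z ∈ ℂ with Im(z) > 0 and c > 0, and suppose |1 + S_n| is bounded away from 0. Then S_n converges to the unique solution S of zS² + (z−1+c)S + c = 0 with Im(S) ≥ 0. -/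
open Filter Complex

lemma root_facts (z : ℂ) (hz : 0 < z.im) (c : ℝ) (hc : 0 < c) (S : ℂ)
    (hroot : z * S ^ 2 + (z - 1 + (c : ℂ)) * S + (c : ℂ) = 0) (hims : 0 ≤ S.im) :
    0 < S.im ∧ S ≠ 0 ∧ 1 + S ≠ 0 ∧ normSq S < c * normSq (1 + S) := by
  have hS0 : S ≠ 0 := by
    rintro rfl
    simp at hroot
    exact hc.ne' (by exact_mod_cast hroot)
  have hS1 : 1 + S ≠ 0 := by
    intro h
    have hSm1 : S = -1 := by linear_combination h
    rw [hSm1] at hroot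
    have : (1 : ℂ) = 0 := by linear_combination hroot
    simp at this
  -- positive imaginary part
  have himpos : 0 < S.im := by
    rcases lt_or_eq_of_le hims with h | h
    · exact h
    have hIm := congrArg Complex.im hroot
    simp only [add_im, mul_im, ofReal_im, sub_im, one_im, ofReal_re, zero_im] at hIm
    have hb : S.im = 0 := h.symm
    have hsq : (S ^ 2).im = 2 * S.re * S.im := by
      simp [sq, mul_im]; ring
    have hsqre : (S ^ 2).re = S.re ^ 2 - S.im ^ 2 := by
      simp [sq, mul_re]
    rw [hsq, hsqre, hb] at hIm
    -- hIm : z.im * (S.re^2) + z.im * S.re = 0  (roughly)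
    have hfac : z.im * (S.re ^ 2 + S.re) = 0 := by ring_nf; ring_nf at hIm; linarith
    have : S.re ^ 2 + S.re = 0 := by
      rcases mul_eq_zero.1 hfac with h' | h'
      · exact absurd h' hz.ne'
      · exact h'
    have : S.re * (S.re + 1) = 0 := by ring_nf; linarith [this]
    rcases mul_eq_zero.1 this with h' | h'
    · exact absurd (Complex.ext h' hb : S = 0) hS0
    · exact absurd (Complex.ext (by simp; linarith) (by simp [hb]) : 1 + S = 0) hS1
  refine ⟨himpos, hS0, hS1, ?_⟩
  have hp : 0 < normSq S := normSq_pos.2 hS0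
  have hq : 0 < normSq (1 + S) := normSq_pos.2 hS1
  -- relation (B): S/(1+S) - z*S = c
  have hB : S / (1 + S) - z * S = (c : ℂ) := by
    field_simp
    linear_combination -hroot
  have hBim : S.im / normSq (1 + S) = z.re * S.im + z.im * S.re := by
    have := congrArg Complex.im hB
    simp only [sub_im, div_im, mul_im, ofReal_im, add_re, add_im, one_re, one_im] at this
    have h2 : (S.im * (1 + S.re) - S.re * S.im) / normSq (1 + S) = S.im / normSq (1 + S) := by
      congr 1; ring
    linear_combination this
  -- relation (A): S * (z*(1+S) + c - 1) = -c
  have hA : S * (z * (1 + S) + (c : ℂ) - 1) = -(c : ℂ) := by linear_combination hroot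
  have hD : z * (1 + S) + (c : ℂ) - 1 = -(c : ℂ) / S := by
    field_simp
    linear_combination hA
  have hAim : z.im + (z.re * S.im + z.im * S.re) = c * S.im / normSq S := by
    have := congrArg Complex.im hD
    simp only [add_im, sub_im, mul_im, ofReal_im, one_im, add_re, one_re, div_im, neg_im,
      neg_re, ofReal_re] at this
    linear_combination this
  -- combine
  have hcomb : c * S.im / normSq S = z.im + S.im / normSq (1 + S) := by
    rw [hBim]; linarith [hAim]
  have hclear : c * S.im * normSq (1 + S) = z.im * normSq S * normSq (1 + S) + S.im * normSq S := by
    field_simp at hcomb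
    linarith [hcomb]
  nlinarith [mul_pos (mul_pos hz hp) hq, himpos]

lemma root_unique (z : ℂ) (hz : 0 < z.im) (c : ℝ) (hc : 0 < c) (S T : ℂ)
    (hS : z * S ^ 2 + (z - 1 + (c : ℂ)) * S + (c : ℂ) = 0) (hims : 0 ≤ S.im)
    (hT : z * T ^ 2 + (z - 1 + (c : ℂ)) * T + (c : ℂ) = 0) (himt : 0 ≤ T.im) :
    S = T := by
  by_contra hne
  obtain ⟨_, hS0, hS1, hSineq⟩ := root_facts z hz c hc S hS hims
  obtain ⟨_, hT0, hT1, hTineq⟩ := root_facts z hz c hc T hT himt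
  have hfac : (S - T) * (z * (S + T) + z - 1 + (c : ℂ)) = 0 := by
    linear_combination hS - hT
  have hsum : z * (S + T) + z - 1 + (c : ℂ) = 0 := by
    rcases mul_eq_zero.1 hfac with h | h
    · exact absurd (sub_eq_zero.1 h) hne
    · exact h
  have hprod : z * S * T = (c : ℂ) := by linear_combination S * hsum - hS
  have hpq : z * (1 + S) * (1 + T) = 1 := by linear_combination hsum + hprod
  have h1 : normSq z * normSq S * normSq T = c ^ 2 := by
    have := congrArg normSq hprod
    rw [normSq_mul, normSq_mul, normSq_ofReal] at this
    nlinarith [this]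
  have h2 : normSq z * normSq (1 + S) * normSq (1 + T) = 1 := by
    have := congrArg normSq hpq
    rw [normSq_mul, normSq_mul] at this
    simpa using this
  have hzpos : 0 < normSq z := normSq_pos.2 (by intro h; rw [h] at hz; simp at hz)
  have hpS : 0 < normSq S := normSq_pos.2 hS0
  have hpT : 0 < normSq T := normSq_pos.2 hT0
  have hqS : 0 < normSq (1 + S) := normSq_pos.2 hS1
  have hqT : 0 < normSq (1 + T) := normSq_pos.2 hT1
  nlinarith [mul_lt_mul'' hSineq hTineq (le_of_lt hpS) (le_of_lt hpT),
    mul_pos (mul_pos hzpos hqS) hqT]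

theorem bounded_sequence_tendsto_unique_root
    (z : ℂ) (hz : 0 < z.im) (c : ℝ) (hc : 0 < c)
    (S : ℕ → ℂ) (hbdd : ∃ M : ℝ, ∀ n, ‖S n‖ ≤ M)
    (him : ∀ n, 0 < (S n).im)
    (hden : ∃ δ : ℝ, 0 < δ ∧ ∀ n, δ ≤ ‖1 + S n‖)
    (heq : Tendsto (fun n => S n / (1 + S n) - z * S n) atTop (nhds (c : ℂ))) :
    ∃ Slim : ℂ,
      (z * Slim ^ 2 + (z - 1 + (c : ℂ)) * Slim + (c : ℂ) = 0 ∧ 0 ≤ Slim.im ∧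
        ∀ T : ℂ, z * T ^ 2 + (z - 1 + (c : ℂ)) * T + (c : ℂ) = 0 → 0 ≤ T.im → T = Slim) ∧
      Tendsto S atTop (nhds Slim) := by
  obtain ⟨M, hM⟩ := hbdd
  obtain ⟨δ, hδ, hδn⟩ := hden
  have hball : ∀ n, S n ∈ Metric.closedBall (0 : ℂ) M := by
    intro n
    simpa using hM n
  have hlim : ∀ (ψ : ℕ → ℕ) (L : ℂ), Tendsto ψ atTop atTop →
      Tendsto (fun n => S (ψ n)) atTop (nhds L) →
      z * L ^ 2 + (z - 1 + (c : ℂ)) * L + (c : ℂ) = 0 ∧ 0 ≤ L.im := by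
    intro ψ L hψ hL
    have hLim : 0 ≤ L.im := by
      have h1 : Tendsto (fun n => (S (ψ n)).im) atTop (nhds L.im) :=
        (Complex.continuous_im.tendsto L).comp hL
      exact le_of_tendsto_of_tendsto' tendsto_const_nhds h1 (fun n => (him (ψ n)).le)
    have h1 : Tendsto (fun n => 1 + S (ψ n)) atTop (nhds (1 + L)) :=
      tendsto_const_nhds.add hL
    have hLden : δ ≤ ‖1 + L‖ := by
      have h2 : Tendsto (fun n => ‖1 + S (ψ n)‖) atTop
          (nhds (‖1 + L‖)) := (continuous_norm.tendsto (1 + L)).comp h1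
      exact le_of_tendsto_of_tendsto' tendsto_const_nhds h2 (fun n => hδn (ψ n))
    have h1L : 1 + L ≠ 0 := by
      intro h
      rw [h] at hLden
      simp at hLden
      linarith
    have hA : Tendsto (fun n => S (ψ n) / (1 + S (ψ n)) - z * S (ψ n)) atTop
        (nhds ((c : ℂ))) := heq.comp hψ
    have hB : Tendsto (fun n => S (ψ n) / (1 + S (ψ n)) - z * S (ψ n)) atTop
        (nhds (L / (1 + L) - z * L)) := (hL.div h1 h1L).sub (tendsto_const_nhds.mul hL)
    have hEqL : L / (1 + L) - z * L = (c : ℂ) := tendsto_nhds_unique hB hA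
    refine ⟨?_, hLim⟩
    field_simp at hEqL
    linear_combination -hEqL
  obtain ⟨Slim, -, φ, hφ, hφL⟩ :=
    tendsto_subseq_of_bounded Metric.isBounded_closedBall hball
  have hroot := hlim φ Slim hφ.tendsto_atTop hφL
  refine ⟨Slim, ⟨hroot.1, hroot.2,
    fun T hT hTim => root_unique z hz c hc T Slim hT hTim hroot.1 hroot.2⟩, ?_⟩
  apply tendsto_of_subseq_tendsto
  intro ns hns
  obtain ⟨L, -, ms, hms, hmsL⟩ :=
    tendsto_subseq_of_bounded Metric.isBounded_closedBall (fun n => hball (ns n))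
  have hcomp : Tendsto (fun n => ns (ms n)) atTop atTop := hns.comp hms.tendsto_atTop
  have hfacts := hlim (fun n => ns (ms n)) L hcomp hmsL
  have hLS : L = Slim := root_unique z hz c hc L Slim hfacts.1 hfacts.2 hroot.1 hroot.2
  exact ⟨ms, hLS ▸ hmsL⟩
end
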